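/- Let 𝒳 = {X_1, …, X_t} be a finite set of events in a probability space with a negative dependency graph D = (𝒳, E). For each i ∈ [t] let ℛ_i be the family of all subsets R of the closed neighbourhood Γ_D*(X_i) such that R is an independent set in D (no two elements of R are adjacent in D). If there are positive real numbers μ_1, …, μ_t such that P(X_i) ≤ μ_i / (Σ_{R∈ℛ_i} ∏_{X_j∈R} μ_j) for all i ∈ [t], then P(⋂_{i∈[t]} X_iᶜ) > 0. -/

import Mathlib

open MeasureTheory

/-- `D` is a negative dependency graph for the events `X i` with respect to `μ`. -/
def IsNegDepGraph {Ω : Type*} [MeasurableSpace Ω] (μ : Measure Ω) {t : ℕ}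
    (X : Fin t → Set Ω) (D : SimpleGraph (Fin t)) : Prop :=
  ∀ (i : Fin t) (Z : Finset (Fin t)), (∀ j ∈ Z, j ≠ i ∧ ¬ D.Adj i j) →
    μ (X i ∩ ⋂ j ∈ Z, (X j)ᶜ) ≤ μ (X i) * μ (⋂ j ∈ Z, (X j)ᶜ)

/-!
Write `Z(A)` for the independence polynomial of `D` restricted to `A`, evaluated at `w`. By strong
induction on `S` one shows `P(X i | ⋂ j ∈ S, (X j)ᶜ) ≤ w i / Z(Γ*(i) \ S)` for `i ∉ S`. Split `S`
into the neighbours of `i` and the rest: negative dependence disposes of the rest, and adding the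
neighbours `j` one at a time never decreases the ratio `P(⋂ j ∈ S, (X j)ᶜ) / Z(Γ*(i) \ S)`.
Indeed, inserting `j` multiplies the probability by at least `1 - w j / Z(Γ*(j) \ S)` (induction
hypothesis), and the polynomial by at most that factor, by the recursion
`Z(A) = Z(A - j) + w j * Z(A \ Γ*(j))` and `Z(A) ≤ Z(A ∩ Γ*(j)) * Z(A \ Γ*(j))`. As that factor is
positive, inserting the events one at a time keeps `P(⋂ i, (X i)ᶜ)` positive.
-/

open Finset

namespace SimpleGraph

variable {ι : Type*} (G : SimpleGraph ι) [DecidableRel G.Adj]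

def indepPoly (w : ι → ℝ) (A : Finset ι) : ℝ :=
  ∑ R ∈ A.powerset.filter (fun R => ∀ a ∈ R, ∀ b ∈ R, ¬ G.Adj a b), ∏ j ∈ R, w j

def closedNeighborFinset [Fintype ι] [DecidableEq ι] (i : ι) : Finset ι :=
  insert i (G.neighborFinset i)

variable {G} {w : ι → ℝ}

theorem mem_closedNeighborFinset [Fintype ι] [DecidableEq ι] {i j : ι} :
    j ∈ G.closedNeighborFinset i ↔ j = i ∨ G.Adj i j := by
  rw [closedNeighborFinset, mem_insert, mem_neighborFinset]

theorem self_mem_closedNeighborFinset [Fintype ι] [DecidableEq ι] (i : ι) :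
    i ∈ G.closedNeighborFinset i :=
  mem_closedNeighborFinset.mpr (Or.inl rfl)

theorem indepPoly_eq_sum_univ [Fintype ι] [DecidableEq ι] (A : Finset ι) :
    G.indepPoly w A = ∑ R ∈ univ.filter (fun R : Finset ι =>
      R ⊆ A ∧ ∀ a ∈ R, ∀ b ∈ R, ¬ G.Adj a b), ∏ j ∈ R, w j := by
  rw [indepPoly, ← filter_subset_univ, filter_filter]
  congr!

theorem insert_indep_iff_subset_sdiff_closedNeighborFinset [Fintype ι] [DecidableEq ι]
    {A R : Finset ι} {j : ι} (hj : j ∉ A) (hR : R ⊆ A) :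
    (∀ a ∈ insert j R, ∀ b ∈ insert j R, ¬ G.Adj a b) ↔
      R ⊆ A \ G.closedNeighborFinset j ∧ ∀ a ∈ R, ∀ b ∈ R, ¬ G.Adj a b := by
  constructor
  · intro h
    refine ⟨fun x hx => mem_sdiff.mpr ⟨hR hx, ?_⟩,
      fun a ha b hb => h a (mem_insert_of_mem ha) b (mem_insert_of_mem hb)⟩
    rw [mem_closedNeighborFinset]
    rintro (rfl | hadj)
    · exact hj (hR hx)
    · exact h j (mem_insert_self j R) x (mem_insert_of_mem hx) hadj
  · rintro ⟨hRN, hRindep⟩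
    have hnadj : ∀ b ∈ R, ¬ G.Adj j b := fun b hb hadj =>
      (mem_sdiff.mp (hRN hb)).2 (mem_closedNeighborFinset.mpr (Or.inr hadj))
    simp only [mem_insert]
    rintro a (rfl | ha) b (rfl | hb)
    · exact G.irrefl
    · exact hnadj b hb
    · exact fun h => hnadj a ha h.symm
    · exact hRindep a ha b hb

theorem indepPoly_insert [Fintype ι] [DecidableEq ι] {A : Finset ι} {j : ι} (hj : j ∉ A) :
    G.indepPoly w (insert j A) =
      G.indepPoly w A + w j * G.indepPoly w (A \ G.closedNeighborFinset j) := by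
  simp only [indepPoly, sum_filter]
  rw [sum_powerset_insert hj, mul_sum]
  congr 1
  rw [← sum_subset (powerset_mono.mpr sdiff_subset)]
  · refine sum_congr rfl fun R hR => ?_
    rw [mem_powerset] at hR
    have hRA := hR.trans sdiff_subset
    have hiff := insert_indep_iff_subset_sdiff_closedNeighborFinset (G := G) hj hRA
    rw [mul_ite, mul_zero, prod_insert fun h => hj (hRA h)]
    split_ifs with h₁ h₂ h₂
    · rfl
    · exact absurd (hiff.mp h₁).2 h₂
    · exact absurd (hiff.mpr ⟨hR, h₂⟩) h₁
    · rfl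
  · intro R hRA hR
    rw [mem_powerset] at hRA hR
    exact if_neg fun h => hR ((insert_indep_iff_subset_sdiff_closedNeighborFinset hj hRA).mp h).1

variable (hw : ∀ i, 0 ≤ w i)
include hw

theorem one_le_indepPoly (A : Finset ι) : 1 ≤ G.indepPoly w A := by
  have hempty : ∅ ∈ A.powerset.filter (fun R => ∀ a ∈ R, ∀ b ∈ R, ¬ G.Adj a b) := by simp
  simpa [indepPoly] using single_le_sum (f := fun R => ∏ j ∈ R, w j)
    (fun R _ => prod_nonneg fun j _ => hw j) hempty

theorem indepPoly_pos (A : Finset ι) : 0 < G.indepPoly w A :=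
  one_pos.trans_le (one_le_indepPoly hw A)

theorem indepPoly_mono {A B : Finset ι} (h : A ⊆ B) : G.indepPoly w A ≤ G.indepPoly w B :=
  sum_le_sum_of_subset_of_nonneg (filter_subset_filter _ (powerset_mono.mpr h))
    fun _ _ _ => prod_nonneg fun j _ => hw j

theorem one_add_le_indepPoly [DecidableEq ι] {A : Finset ι} {j : ι} (hj : j ∈ A) :
    1 + w j ≤ G.indepPoly w A := by
  have hsub : {∅, {j}} ⊆ A.powerset.filter (fun R => ∀ a ∈ R, ∀ b ∈ R, ¬ G.Adj a b) := by
    simp [insert_subset_iff, hj]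
  simpa [indepPoly] using sum_le_sum_of_subset_of_nonneg (f := fun R => ∏ j ∈ R, w j) hsub
    fun R _ _ => prod_nonneg fun j _ => hw j

theorem div_indepPoly_lt_one [DecidableEq ι] {A : Finset ι} {j : ι} (hj : j ∈ A) :
    w j / G.indepPoly w A < 1 := by
  rw [div_lt_one (indepPoly_pos (G := G) hw A)]
  linarith [one_add_le_indepPoly (G := G) hw hj]

theorem indepPoly_le_mul_inter_sdiff [DecidableEq ι] (A B : Finset ι) :
    G.indepPoly w A ≤ G.indepPoly w (A ∩ B) * G.indepPoly w (A \ B) := by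
  set F := fun A : Finset ι => A.powerset.filter (fun R => ∀ a ∈ R, ∀ b ∈ R, ¬ G.Adj a b)
  have hsplit : ∀ R : Finset ι, (R ∩ B) ∪ (R \ B) = R := fun R => sup_inf_sdiff R B
  have hinj : Set.InjOn (fun R => (R ∩ B, R \ B)) (F A) := fun R _ R' _ h => by
    simp only [Prod.mk.injEq] at h
    rw [← hsplit R, ← hsplit R', h.1, h.2]
  have hmaps : (F A).image (fun R => (R ∩ B, R \ B)) ⊆ F (A ∩ B) ×ˢ F (A \ B) := by
    simp only [F, image_subset_iff, mem_product, mem_filter, mem_powerset]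
    rintro R ⟨hRA, hR⟩
    exact ⟨⟨inter_subset_inter_right hRA,
        fun a ha b hb => hR a (mem_inter.mp ha).1 b (mem_inter.mp hb).1⟩,
      ⟨sdiff_subset_sdiff hRA le_rfl,
        fun a ha b hb => hR a (mem_sdiff.mp ha).1 b (mem_sdiff.mp hb).1⟩⟩
  calc G.indepPoly w A
      = ∑ p ∈ (F A).image (fun R => (R ∩ B, R \ B)), (∏ j ∈ p.1, w j) * ∏ j ∈ p.2, w j := by
        rw [sum_image hinj, indepPoly]
        refine sum_congr rfl fun R _ => ?_
        rw [← prod_union (disjoint_sdiff_inter R B).symm, hsplit]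
    _ ≤ ∑ p ∈ F (A ∩ B) ×ˢ F (A \ B), (∏ j ∈ p.1, w j) * ∏ j ∈ p.2, w j :=
        sum_le_sum_of_subset_of_nonneg hmaps fun p _ _ =>
          mul_nonneg (prod_nonneg fun j _ => hw j) (prod_nonneg fun j _ => hw j)
    _ = G.indepPoly w (A ∩ B) * G.indepPoly w (A \ B) := by
        rw [indepPoly, indepPoly, sum_mul_sum, sum_product]

theorem indepPoly_erase_le [Fintype ι] [DecidableEq ι] {A B : Finset ι} {j : ι} (hj : j ∈ A)
    (hB : A ∩ G.closedNeighborFinset j ⊆ B) :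
    G.indepPoly w (A.erase j) ≤ (1 - w j / G.indepPoly w B) * G.indepPoly w A := by
  set N := G.closedNeighborFinset j
  have hrec := indepPoly_insert (G := G) (w := w) (notMem_erase j A)
  rw [insert_erase hj, erase_sdiff_comm,
    erase_eq_of_notMem (notMem_sdiff_of_mem_right (self_mem_closedNeighborFinset j))] at hrec
  have hZB := indepPoly_pos (G := G) hw B
  have hsplit : G.indepPoly w A ≤ G.indepPoly w B * G.indepPoly w (A \ N) :=
    (indepPoly_le_mul_inter_sdiff hw A N).trans
      (mul_le_mul_of_nonneg_right (indepPoly_mono hw hB) (indepPoly_pos hw _).le)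
  have hdiv : w j / G.indepPoly w B * G.indepPoly w A ≤ w j * G.indepPoly w (A \ N) := by
    rw [div_mul_eq_mul_div, div_le_iff₀ hZB, mul_assoc, mul_comm (G.indepPoly w (A \ N))]
    exact mul_le_mul_of_nonneg_left hsplit (hw j)
  linarith

end SimpleGraph

open SimpleGraph

section CondBound

variable {Ω : Type*} [MeasurableSpace Ω] (μ : Measure Ω) {ι : Type*} [Fintype ι] [DecidableEq ι]
  (X : ι → Set Ω) (G : SimpleGraph ι) [DecidableRel G.Adj] (w : ι → ℝ)

/-- `P(X i | ⋂ j ∈ S, (X j)ᶜ) ≤ w i / Z(Γ*(i) \ S)`, multiplied out so that it stays meaningful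
when the conditioning event is null. -/
def CondBound (S : Finset ι) (i : ι) : Prop :=
  μ.real (X i ∩ ⋂ j ∈ S, (X j)ᶜ) ≤
    w i / G.indepPoly w (G.closedNeighborFinset i \ S) * μ.real (⋂ j ∈ S, (X j)ᶜ)

variable {μ X G w} [IsFiniteMeasure μ]

theorem CondBound.one_sub_mul_le {S : Finset ι} {i : ι} (hb : CondBound μ X G w S i) :
    (1 - w i / G.indepPoly w (G.closedNeighborFinset i \ S)) * μ.real (⋂ j ∈ S, (X j)ᶜ) ≤
      μ.real (⋂ j ∈ insert i S, (X j)ᶜ) := by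
  have hsdiff : (⋂ j ∈ S, (X j)ᶜ) \ (X i ∩ ⋂ j ∈ S, (X j)ᶜ) = ⋂ j ∈ insert i S, (X j)ᶜ := by
    rw [set_biInter_insert, Set.sdiff_inter_self_eq_sdiff, Set.sdiff_eq, Set.inter_comm]
  have := le_measureReal_sdiff (μ := μ) (s₁ := ⋂ j ∈ S, (X j)ᶜ) (s₂ := X i ∩ ⋂ j ∈ S, (X j)ᶜ)
  rw [hsdiff] at this
  unfold CondBound at hb
  linarith

variable (hw : ∀ i, 0 ≤ w i)
include hw

theorem CondBound.div_le_div_insert {A S : Finset ι} {j : ι} (hjA : j ∈ A) (hjS : j ∉ S)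
    (hb : CondBound μ X G w S j) :
    μ.real (⋂ k ∈ S, (X k)ᶜ) / G.indepPoly w (A \ S) ≤
      μ.real (⋂ k ∈ insert j S, (X k)ᶜ) / G.indepPoly w (A \ insert j S) := by
  set r := w j / G.indepPoly w (G.closedNeighborFinset j \ S)
  have hpoly : G.indepPoly w (A \ insert j S) ≤ (1 - r) * G.indepPoly w (A \ S) := by
    rw [sdiff_insert]
    refine indepPoly_erase_le hw (mem_sdiff.mpr ⟨hjA, hjS⟩) fun k hk => ?_
    rw [mem_inter, mem_sdiff] at hk
    exact mem_sdiff.mpr ⟨hk.2, hk.1.2⟩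
  rw [div_le_div_iff₀ (indepPoly_pos hw _) (indepPoly_pos hw _)]
  calc μ.real (⋂ k ∈ S, (X k)ᶜ) * G.indepPoly w (A \ insert j S)
      ≤ μ.real (⋂ k ∈ S, (X k)ᶜ) * ((1 - r) * G.indepPoly w (A \ S)) :=
        mul_le_mul_of_nonneg_left hpoly measureReal_nonneg
    _ = (1 - r) * μ.real (⋂ k ∈ S, (X k)ᶜ) * G.indepPoly w (A \ S) := by ring
    _ ≤ _ := mul_le_mul_of_nonneg_right hb.one_sub_mul_le (indepPoly_pos hw _).le

theorem div_le_div_union_of_condBound {A S T : Finset ι} (hTA : T ⊆ A) (hST : Disjoint S T)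
    (hb : ∀ V ⊆ T, ∀ j ∈ T, j ∉ V → CondBound μ X G w (S ∪ V) j) :
    μ.real (⋂ k ∈ S, (X k)ᶜ) / G.indepPoly w (A \ S) ≤
      μ.real (⋂ k ∈ S ∪ T, (X k)ᶜ) / G.indepPoly w (A \ (S ∪ T)) := by
  induction T using Finset.induction_on with
  | empty => rw [union_empty]
  | insert j T hjT ih =>
    have hTA' : T ⊆ A := (subset_insert j T).trans hTA
    have hST' : Disjoint S T := hST.mono_right (subset_insert j T)
    have hjST : j ∉ S ∪ T := by
      rw [mem_union, not_or]
      exact ⟨disjoint_right.mp hST (mem_insert_self j T), hjT⟩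
    rw [union_insert]
    refine (ih hTA' hST' fun V hV k hk hkV => hb V (hV.trans (subset_insert j T)) k
      (mem_insert_of_mem hk) hkV).trans ?_
    exact (hb T (subset_insert j T) j (mem_insert_self j T) hjT).div_le_div_insert hw
      (hTA (mem_insert_self j T)) hjST

theorem div_le_div_of_condBound_of_ssubset {A F S : Finset ι}
    (hb : ∀ T ⊂ S, ∀ j ∉ T, CondBound μ X G w T j) (hFS : F ⊆ S) (hSA : S \ F ⊆ A) :
    μ.real (⋂ k ∈ F, (X k)ᶜ) / G.indepPoly w (A \ F) ≤
      μ.real (⋂ k ∈ S, (X k)ᶜ) / G.indepPoly w (A \ S) := by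
  have hS : F ∪ (S \ F) = S := union_sdiff_of_subset hFS
  rw [← hS]
  refine div_le_div_union_of_condBound hw hSA disjoint_sdiff fun V hV j hj hjV => ?_
  have hj' : j ∉ F ∪ V := by
    rw [mem_union, not_or]
    exact ⟨(mem_sdiff.mp hj).2, hjV⟩
  refine hb _ ((ssubset_iff_of_subset ?_).mpr ⟨j, hS ▸ mem_union_right F hj, hj'⟩) j hj'
  exact hS ▸ union_subset_union subset_rfl hV

theorem measureReal_iInter_compl_pos_of_condBound [IsProbabilityMeasure μ]
    (hb : ∀ S : Finset ι, ∀ i ∉ S, CondBound μ X G w S i) (S : Finset ι) :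
    0 < μ.real (⋂ j ∈ S, (X j)ᶜ) := by
  induction S using Finset.induction_on with
  | empty => simp
  | insert i S hiS ih =>
    have hr := div_indepPoly_lt_one (G := G) hw
      (mem_sdiff.mpr ⟨G.self_mem_closedNeighborFinset i, hiS⟩)
    exact (mul_pos (sub_pos.mpr hr) ih).trans_le ((hb S i hiS).one_sub_mul_le)

end CondBound

section NegDepGraph

variable {Ω : Type*} [MeasurableSpace Ω] {μ : Measure Ω} [IsFiniteMeasure μ] {t : ℕ}
  {X : Fin t → Set Ω} {D : SimpleGraph (Fin t)}

theorem IsNegDepGraph.measureReal_inter_le (hD : IsNegDepGraph μ X D) {i : Fin t}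
    {Z : Finset (Fin t)} (hZ : ∀ j ∈ Z, j ≠ i ∧ ¬ D.Adj i j) :
    μ.real (X i ∩ ⋂ j ∈ Z, (X j)ᶜ) ≤ μ.real (X i) * μ.real (⋂ j ∈ Z, (X j)ᶜ) := by
  rw [measureReal_def, measureReal_def, measureReal_def, ← ENNReal.toReal_mul]
  exact ENNReal.toReal_mono (by finiteness) (hD i Z hZ)

variable [DecidableRel D.Adj] {w : Fin t → ℝ}

theorem IsNegDepGraph.condBound (hD : IsNegDepGraph μ X D) (hw : ∀ i, 0 ≤ w i)
    (hP : ∀ i, μ.real (X i) ≤ w i / D.indepPoly w (D.closedNeighborFinset i))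
    (S : Finset (Fin t)) (i : Fin t) (hi : i ∉ S) : CondBound μ X D w S i := by
  induction S using Finset.strongInduction generalizing i with
  | H S ih =>
    set far := S.filter fun j => ¬ D.Adj i j
    have hfar : far ⊆ S := filter_subset _ S
    have hnear : S \ far ⊆ D.closedNeighborFinset i := fun j hj => by
      rw [mem_sdiff, mem_filter, not_and, not_not] at hj
      exact mem_closedNeighborFinset.mpr (Or.inr (hj.2 hj.1))
    have hchain := div_le_div_of_condBound_of_ssubset hw ih hfar hnear
    have hnum : μ.real (X i ∩ ⋂ j ∈ S, (X j)ᶜ) ≤ μ.real (X i) * μ.real (⋂ j ∈ far, (X j)ᶜ) :=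
      (measureReal_mono (Set.inter_subset_inter_right _
        (Set.iInter₂_mono' fun j hj => ⟨j, hfar hj, subset_rfl⟩))).trans
        (hD.measureReal_inter_le fun j hj => ⟨fun h => hi (h ▸ hfar hj), (mem_filter.mp hj).2⟩)
    have hpoly : D.indepPoly w (D.closedNeighborFinset i \ far) ≤
        D.indepPoly w (D.closedNeighborFinset i) := indepPoly_mono hw sdiff_subset
    calc μ.real (X i ∩ ⋂ j ∈ S, (X j)ᶜ)
        ≤ w i / D.indepPoly w (D.closedNeighborFinset i) * μ.real (⋂ j ∈ far, (X j)ᶜ) :=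
          hnum.trans (mul_le_mul_of_nonneg_right (hP i) measureReal_nonneg)
      _ ≤ w i / D.indepPoly w (D.closedNeighborFinset i \ far) * μ.real (⋂ j ∈ far, (X j)ᶜ) := by
          gcongr
          · exact hw i
          · exact indepPoly_pos hw _
      _ = w i * (μ.real (⋂ j ∈ far, (X j)ᶜ) / D.indepPoly w (D.closedNeighborFinset i \ far)) := by
          ring
      _ ≤ w i * (μ.real (⋂ j ∈ S, (X j)ᶜ) / D.indepPoly w (D.closedNeighborFinset i \ S)) :=
          mul_le_mul_of_nonneg_left hchain (hw i)
      _ = _ := by ring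

end NegDepGraph

theorem cluster_expansion_local_lemma_general_general
    {Ω : Type*} [MeasurableSpace Ω] (μ : Measure Ω) [IsProbabilityMeasure μ]
    {t : ℕ} (X : Fin t → Set Ω)
    (D : SimpleGraph (Fin t)) [DecidableRel D.Adj]
    (hD : IsNegDepGraph μ X D)
    (w : Fin t → ℝ) (hw : ∀ i, 0 < w i)
    (hP : ∀ i, μ (X i) ≤ ENNReal.ofReal (w i /
      ∑ R ∈ Finset.univ.filter (fun R : Finset (Fin t) =>
          R ⊆ insert i (D.neighborFinset i) ∧ ∀ a ∈ R, ∀ b ∈ R, ¬ D.Adj a b),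
        ∏ j ∈ R, w j)) :
    0 < μ (⋂ i, (X i)ᶜ) := by
  have hw₀ : ∀ i, 0 ≤ w i := fun i => (hw i).le
  have hP' : ∀ i, μ.real (X i) ≤ w i / D.indepPoly w (D.closedNeighborFinset i) := fun i =>
    ENNReal.toReal_le_of_le_ofReal (div_nonneg (hw₀ i) (indepPoly_pos hw₀ _).le)
      (by rw [indepPoly_eq_sum_univ, closedNeighborFinset]; convert hP i)
  have hpos := measureReal_iInter_compl_pos_of_condBound hw₀ (hD.condBound hw₀ hP') univ
  simp only [mem_univ, Set.iInter_true] at hpos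
  exact (ENNReal.toReal_pos_iff.mp hpos).1

/-- **Lemma 10(ii)** (Bissacot–Fernández–Procacci–Scoppola, cluster-expansion local lemma):
if there are `w i > 0` with `P(X i) ≤ w i / (Σ_{R ∈ ℛ_i} Π_{j ∈ R} w j)` for all `i`, where
`ℛ_i` is the family of all independent subsets of the closed neighbourhood of `X i` in a
negative dependency graph `D`, then with positive probability no event occurs. -/
theorem cluster_expansion_local_lemma_general
    {Ω : Type*} [MeasurableSpace Ω] (μ : Measure Ω) [IsProbabilityMeasure μ]
    {t : ℕ} (X : Fin t → Set Ω) (hmeas : ∀ i, MeasurableSet (X i))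
    (D : SimpleGraph (Fin t)) [DecidableRel D.Adj]
    (hD : IsNegDepGraph μ X D)
    (w : Fin t → ℝ) (hw : ∀ i, 0 < w i)
    (hP : ∀ i, μ (X i) ≤ ENNReal.ofReal (w i /
      ∑ R ∈ Finset.univ.filter (fun R : Finset (Fin t) =>
          R ⊆ insert i (D.neighborFinset i) ∧ ∀ a ∈ R, ∀ b ∈ R, ¬ D.Adj a b),
        ∏ j ∈ R, w j)) :
    0 < μ (⋂ i, (X i)ᶜ) :=
  cluster_expansion_local_lemma_general_general μ X D hD w hw hP
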